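/- Let g be a finite-dimensional nilpotent Lie algebra over a field K, λ a linear functional on g, and z a central element of g with λ(z) ≠ 0. Suppose y ∈ g and α : g → K is a nonzero K-linear map such that ⁅u, y⁆ = α(u)·z for all u ∈ g, and let g₀ = ker α (a codimension-one Lie subalgebra of g). If p₀ ⊆ g₀ is a Lie subalgebra of g₀ that is a maximal isotropic subspace of g₀ for the form (x, w) ↦ λ(⁅x, w⁆) restricted to g₀, then p₀ is a maximal isotropic subspace of g for B_λ(x, w) = λ(⁅x, w⁆); that is, p₀ is a polarization of λ in g. -/

import Mathlib

/-!
Since `α y • z = ⁅y, y⁆ = 0`, the vector `y` lies in `g₀ = ker α`, and `B_λ(u, y) = α u · λ z`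
vanishes on `g₀`. Hence `p₀ + K y` is still isotropic in `g₀`, so maximality puts `y` in `p₀`.
Conversely, any isotropic `W ⊇ p₀` then pairs trivially with `y`, which forces `α = 0` on `W`
because `λ z ≠ 0`; so `W ⊆ g₀` and maximality in `g₀` gives `W = p₀`.
-/

section Isotropic

variable {K L : Type*} [CommRing K] [LieRing L] [LieAlgebra K L]

def Submodule.IsIsotropic (lam : L →ₗ[K] K) (W : Submodule K L) : Prop :=
  ∀ x ∈ W, ∀ w ∈ W, lam ⁅x, w⁆ = 0

theorem Submodule.IsIsotropic.sup_span_singleton {lam : L →ₗ[K] K} {W : Submodule K L}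
    (hW : W.IsIsotropic lam) {y : L} (hy : ∀ a ∈ W, lam ⁅a, y⁆ = 0) :
    (W ⊔ K ∙ y).IsIsotropic lam := by
  intro x hx w hw
  obtain ⟨a, ha, _, hb, rfl⟩ := Submodule.mem_sup.mp hx
  obtain ⟨c, hc, _, hd, rfl⟩ := Submodule.mem_sup.mp hw
  obtain ⟨s, rfl⟩ := Submodule.mem_span_singleton.mp hb
  obtain ⟨t, rfl⟩ := Submodule.mem_span_singleton.mp hd
  have hyc : lam ⁅y, c⁆ = 0 := by rw [← lie_skew, map_neg, hy c hc, neg_zero]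
  simp [hW a ha c hc, hy a ha, hyc]

end Isotropic

section LieEqSmul

variable {K L : Type*} [Field K] [LieRing L] [LieAlgebra K L]
  {y z : L} {α : L →ₗ[K] K} (hy : ∀ u : L, ⁅u, y⁆ = α u • z)
include hy

theorem mem_ker_of_lie_eq_smul (hz : z ≠ 0) : y ∈ LinearMap.ker α := by
  have h := hy y
  rw [lie_self, eq_comm, smul_eq_zero] at h
  exact h.resolve_right hz

theorem lam_lie_eq_mul_of_lie_eq_smul (lam : L →ₗ[K] K) (u : L) :
    lam ⁅u, y⁆ = α u * lam z := by
  rw [hy u, map_smul, smul_eq_mul]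

theorem le_ker_of_lam_lie_eq_zero {lam : L →ₗ[K] K} (hz : lam z ≠ 0) {W : Submodule K L}
    (hW : ∀ w ∈ W, lam ⁅w, y⁆ = 0) : W ≤ LinearMap.ker α := fun w hw => by
  have h := hW w hw
  rw [lam_lie_eq_mul_of_lie_eq_smul hy] at h
  exact (mul_eq_zero.mp h).resolve_right hz

end LieEqSmul

theorem polarization_of_max_isotropic_in_kernel_general
    (K : Type*) [Field K] (L : Type*) [LieRing L] [LieAlgebra K L]
    (lam : L →ₗ[K] K)
    (z : L) (hz : lam z ≠ 0)
    (y : L) (α : L →ₗ[K] K)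
    (hy : ∀ u : L, ⁅u, y⁆ = α u • z)
    (p0 : LieSubalgebra K L) (hp0 : p0.toSubmodule ≤ LinearMap.ker α)
    (hiso : ∀ x ∈ p0, ∀ w ∈ p0, lam ⁅x, w⁆ = 0)
    (hmax : ∀ W : Submodule K L, W ≤ LinearMap.ker α →
      (∀ x ∈ W, ∀ w ∈ W, lam ⁅x, w⁆ = 0) → p0.toSubmodule ≤ W → W = p0.toSubmodule) :
    (∀ x ∈ p0, ∀ w ∈ p0, lam ⁅x, w⁆ = 0) ∧
    ∀ W : Submodule K L, (∀ x ∈ W, ∀ w ∈ W, lam ⁅x, w⁆ = 0) →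
      p0.toSubmodule ≤ W → W = p0.toSubmodule := by
  have hy_ker : y ∈ LinearMap.ker α :=
    mem_ker_of_lie_eq_smul hy fun h => hz (by rw [h, map_zero])
  have hyp0 : y ∈ p0 := by
    have hsup_iso : (p0.toSubmodule ⊔ K ∙ y).IsIsotropic lam :=
      Submodule.IsIsotropic.sup_span_singleton hiso fun a ha => by
        rw [lam_lie_eq_mul_of_lie_eq_smul hy, hp0 ha, zero_mul]
    have hsup := hmax _ (sup_le hp0 (Submodule.span_singleton_le_iff_mem _ _ |>.mpr hy_ker))
      hsup_iso le_sup_left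
    rw [← LieSubalgebra.mem_toSubmodule, ← hsup]
    exact Submodule.mem_sup_right (Submodule.mem_span_singleton_self y)
  refine ⟨hiso, fun W hW hle => hmax W ?_ hW hle⟩
  exact le_ker_of_lam_lie_eq_zero hy hz fun w hw => hW w hw y (hle hyp0)

/-- Key induction step in the construction of polarizations: let `λ` be a linear functional on
a finite-dimensional nilpotent Lie algebra `g`, `z` a central element with `λ z ≠ 0`, and
`y`, `α ≠ 0` with `⁅u, y⁆ = α u • z` for all `u`; put `g₀ = ker α`. If a Lie subalgebra
`p₀ ⊆ g₀` is a maximal isotropic subspace of `g₀` for `B_λ`, then `p₀` is a maximal isotropic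
subspace of `g` for `B_λ`, i.e. a polarization of `λ` in `g`. -/
theorem polarization_of_max_isotropic_in_kernel
    (K : Type*) [Field K] (L : Type*) [LieRing L] [LieAlgebra K L]
    [FiniteDimensional K L] [LieRing.IsNilpotent L]
    (lam : L →ₗ[K] K)
    (z : L) (hcentral : ∀ x : L, ⁅x, z⁆ = 0) (hz : lam z ≠ 0)
    (y : L) (α : L →ₗ[K] K) (hα : α ≠ 0)
    (hy : ∀ u : L, ⁅u, y⁆ = α u • z)
    (p0 : LieSubalgebra K L) (hp0 : p0.toSubmodule ≤ LinearMap.ker α)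
    (hiso : ∀ x ∈ p0, ∀ w ∈ p0, lam ⁅x, w⁆ = 0)
    (hmax : ∀ W : Submodule K L, W ≤ LinearMap.ker α →
      (∀ x ∈ W, ∀ w ∈ W, lam ⁅x, w⁆ = 0) → p0.toSubmodule ≤ W → W = p0.toSubmodule) :
    (∀ x ∈ p0, ∀ w ∈ p0, lam ⁅x, w⁆ = 0) ∧
    ∀ W : Submodule K L, (∀ x ∈ W, ∀ w ∈ W, lam ⁅x, w⁆ = 0) →
      p0.toSubmodule ≤ W → W = p0.toSubmodule :=
  polarization_of_max_isotropic_in_kernel_general K L lam z hz y α hy p0 hp0 hiso hmax
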